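/- arXiv:1809.11147 — 6 statements merged into one kernel-verified Lean document; each statement's English description precedes it below -/
import Mathlib

section
/- For every natural number n ≥ 1 there exists a family Σ of ⌈n/2⌉ linear orders on the set {0, 1, …, n−1} such that for all distinct i, j ∈ {0, …, n−1} there exists an order σ ∈ Σ in which i and j are adjacent, i.e., no element k ∈ {0, …, n−1} satisfies i ≺_σ k ≺_σ j or j ≺_σ k ≺_σ i. -/
/-! Number the vertices by `ZMod n`. The `k`-th order is the zigzag `k, k - 1, k + 1, k - 2, k + 2, …`,
i.e. offset `u = v - k` sits at position `2u` if `2u < n` and at `2(n - u) - 1` otherwise. Its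
consecutive pairs are exactly the pairs `{a, b}` with `a + b = 2k` or `a + b = 2k - 1`, and as `k`
runs over `0, …, ⌈n/2⌉ - 1` these two residues cover all of `ZMod n`. -/

open Function

def zigzag (n u : ℕ) : ℕ :=
  if 2 * u < n then 2 * u else 2 * (n - u) - 1

theorem zigzag_injOn (n : ℕ) : Set.InjOn (zigzag n) (Set.Iio n) := by
  intro u hu v hv h
  simp only [Set.mem_Iio] at hu hv
  unfold zigzag at h
  split_ifs at h <;> omega

theorem zigzag_consecutive {n u v : ℕ} (hu : u < n) (hv : v < n) (huv : u ≠ v)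
    (hsum : u + v = n ∨ u + v + 1 = n) :
    zigzag n u + 1 = zigzag n v ∨ zigzag n v + 1 = zigzag n u := by
  unfold zigzag
  split_ifs <;> omega

namespace ZMod

variable {n : ℕ} [NeZero n]

theorem val_add_val_of_add_eq_zero {a b : ZMod n} (hab : a ≠ b) (h : a + b = 0) :
    a.val + b.val = n := by
  rcases lt_or_ge (a.val + b.val) n with hlt | hle
  · have := val_add_of_lt hlt
    rw [h, val_zero] at this
    exact absurd (val_injective n (by omega)) hab
  · have := val_add_val_of_le hle
    rw [h, val_zero] at this
    omega

theorem val_add_val_of_add_eq_neg_one {a b : ZMod n} (h : a + b = -1) :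
    a.val + b.val + 1 = n := by
  have hneg : (-1 : ZMod n).val + 1 = n := by
    obtain ⟨m, rfl⟩ := Nat.exists_eq_succ_of_ne_zero (NeZero.ne n)
    rw [val_neg_one]
  have ha := val_lt a
  have hb := val_lt b
  rcases lt_or_ge (a.val + b.val) n with hlt | hle
  · rw [← val_add_of_lt hlt, h]; exact hneg
  · have := val_add_val_of_le hle
    rw [h] at this
    omega

theorem exists_lt_eq_two_mul_or_two_mul_sub_one (s : ZMod n) :
    ∃ k < (n + 1) / 2, s = 2 * k ∨ s = 2 * k - 1 := by
  have hs := val_lt s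
  rw [← natCast_zmod_val s]
  obtain ⟨m, hm | hm⟩ := Nat.even_or_odd' s.val <;> rw [hm] at hs ⊢
  · exact ⟨m, by omega, Or.inl (by push_cast; ring)⟩
  · by_cases hlast : 2 * m + 2 = n
    · refine ⟨0, by omega, Or.inr ?_⟩
      have : ((2 * m + 2 : ℕ) : ZMod n) = 0 := by rw [hlast, natCast_self]
      push_cast at this ⊢
      linear_combination this
    · exact ⟨m + 1, by omega, Or.inr (by push_cast; ring)⟩

theorem exists_val_sub_add_val_sub {a b : ZMod n} (hab : a ≠ b) :
    ∃ k < (n + 1) / 2,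
      (a - k).val + (b - k).val = n ∨ (a - k).val + (b - k).val + 1 = n := by
  obtain ⟨k, hk, hs | hs⟩ := exists_lt_eq_two_mul_or_two_mul_sub_one (a + b)
  · refine ⟨k, hk, Or.inl (val_add_val_of_add_eq_zero (by simpa using hab) ?_)⟩
    linear_combination hs
  · refine ⟨k, hk, Or.inr (val_add_val_of_add_eq_neg_one ?_)⟩
    linear_combination hs

end ZMod

def zigzagPos (n k : ℕ) (v : Fin n) : ℕ :=
  zigzag n (((v : ℕ) : ZMod n) - k).val

theorem Fin.natCast_zmod_injective (n : ℕ) : Injective (fun v : Fin n => ((v : ℕ) : ZMod n)) :=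
  fun v w h => Fin.ext <| by
    simpa [ZMod.val_natCast_of_lt v.isLt, ZMod.val_natCast_of_lt w.isLt] using congrArg ZMod.val h

section
variable {n : ℕ} [NeZero n]

theorem Fin.val_natCast_zmod_sub_injective (k : ℕ) :
    Injective (fun v : Fin n => (((v : ℕ) : ZMod n) - k).val) :=
  fun _ _ h => Fin.natCast_zmod_injective n <| sub_left_injective <| ZMod.val_injective n h

theorem zigzagPos_injective (k : ℕ) : Injective (zigzagPos n k) := fun _ _ h =>
  Fin.val_natCast_zmod_sub_injective k <| zigzag_injOn n (ZMod.val_lt _) (ZMod.val_lt _) h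

theorem exists_zigzagPos_consecutive {v w : Fin n} (hvw : v ≠ w) :
    ∃ k < (n + 1) / 2,
      zigzagPos n k v + 1 = zigzagPos n k w ∨ zigzagPos n k w + 1 = zigzagPos n k v := by
  obtain ⟨k, hk, hsum⟩ := ZMod.exists_val_sub_add_val_sub ((Fin.natCast_zmod_injective n).ne hvw)
  exact ⟨k, hk, zigzag_consecutive (ZMod.val_lt _) (ZMod.val_lt _)
    ((Fin.val_natCast_zmod_sub_injective k).ne hvw) hsum⟩
end

/-- there are `⌈n/2⌉` linear orders on `{0, …, n−1}` such that every pair of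
distinct elements is adjacent in one of them. -/
theorem exists_orderings_every_pair_adjacent (n : ℕ) (hn : 1 ≤ n) :
    ∃ σ : Fin ((n + 1) / 2) → (Fin n → Fin n → Prop),
      (∀ k, IsStrictTotalOrder (Fin n) (σ k)) ∧
      ∀ i j : Fin n, i ≠ j →
        ∃ k, ∀ l : Fin n,
          ¬(σ k i l ∧ σ k l j) ∧ ¬(σ k j l ∧ σ k l i) := by
  have : NeZero n := ⟨by omega⟩
  refine ⟨fun k => (· < · : ℕ → ℕ → Prop) on zigzagPos n k,
    fun k => (zigzagPos_injective k).isStrictTotalOrder_onFun _, fun i j hij => ?_⟩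
  obtain ⟨k, hk, hadj⟩ := exists_zigzagPos_consecutive hij
  refine ⟨⟨k, hk⟩, fun l => ?_⟩
  simp only [onFun]
  omega
end

section
/- For every even natural number n ≥ 2, the edge set of the complete graph K_n on n vertices can be partitioned into n/2 pairwise edge-disjoint Hamiltonian paths; that is, there exist n/2 paths in K_n, each visiting every vertex exactly once, such that every edge of K_n belongs to exactly one of these paths. -/
/-!
Walecki's construction. Identify the vertices of `K_{2m}` with `ZMod (2m)`. For `i < m` let `P_i`
be the zigzag path `i, i + 1, i - 1, i + 2, i - 2, …, i + m`; it visits every residue once, and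
each of its edges `{u, v}` has `u + v ∈ {2i, 2i + 1}`. These sums are distinct for distinct `i`,
so the `m` paths are edge-disjoint, and since they have `m (2m - 1) = (2m).choose 2` edges in total
they cover every edge.
-/

open Finset

namespace SimpleGraph

variable {V : Type*} {G : SimpleGraph V}

def walkOfFn (f : ℕ → V) (k : ℕ) (hf : ∀ j < k, G.Adj (f j) (f (j + 1))) : G.Walk (f 0) (f k) :=
  (Walk.ofSupport ((List.range (k + 1)).map f) (by simp)
    ((List.isChain_map f).2 ((List.isChain_range _ _).2 hf))).copy (by simp) (by simp)

section walkOfFn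

variable {f : ℕ → V} {k : ℕ} {hf : ∀ j < k, G.Adj (f j) (f (j + 1))}

@[simp]
lemma support_walkOfFn : (G.walkOfFn f k hf).support = (List.range (k + 1)).map f := by
  simp [walkOfFn]

@[simp]
lemma length_walkOfFn : (G.walkOfFn f k hf).length = k := by
  simp [walkOfFn]

lemma getVert_walkOfFn {j : ℕ} (hj : j ≤ k) : (G.walkOfFn f k hf).getVert j = f j := by
  simp [Walk.getVert_eq_support_getElem _ (hj.trans_eq length_walkOfFn.symm)]

lemma exists_eq_of_mem_edges_walkOfFn {e : Sym2 V} (he : e ∈ (G.walkOfFn f k hf).edges) :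
    ∃ j < k, e = s(f j, f (j + 1)) := by
  induction e using Sym2.ind with
  | _ x y =>
    obtain ⟨j, hj, hxy⟩ := (Walk.mk_mem_edges_iff_exists _).1 he
    rw [length_walkOfFn] at hj
    exact ⟨j, hj, by rw [← hxy, getVert_walkOfFn hj.le, getVert_walkOfFn hj]⟩

lemma isHamiltonian_walkOfFn [Fintype V] [DecidableEq V] (hk : k + 1 = Fintype.card V)
    (hinj : Set.InjOn f (Set.Iio (k + 1))) : (G.walkOfFn f k hf).IsHamiltonian := by
  refine Walk.isHamiltonian_iff_isPath_and_length_eq.2 ⟨?_, by rw [length_walkOfFn]; omega⟩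
  rw [Walk.isPath_def, support_walkOfFn]
  exact List.nodup_range.map_on fun x hx y hy ↦ hinj (List.mem_range.1 hx) (List.mem_range.1 hy)

end walkOfFn

def HasHamiltonianPathDecomposition [DecidableEq V] (G : SimpleGraph V) (ι : Type*) : Prop :=
  ∃ (a b : ι → V) (w : ∀ i, G.Walk (a i) (b i)),
    (∀ i, (w i).IsHamiltonian) ∧ ∀ e ∈ G.edgeSet, ∃! i, e ∈ (w i).edges

lemma existsUnique_mem_edges_of_card_le_sum_length [Fintype V] [DecidableEq V]
    [DecidableRel G.Adj] {ι : Type*} [Fintype ι] {a b : ι → V} {w : ∀ i, G.Walk (a i) (b i)}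
    (htrail : ∀ i, (w i).IsTrail)
    (hdisj : ∀ i j e, e ∈ (w i).edges → e ∈ (w j).edges → i = j)
    (hcard : #G.edgeFinset ≤ ∑ i, (w i).length) :
    ∀ e ∈ G.edgeSet, ∃! i, e ∈ (w i).edges := by
  set S := univ.biUnion fun i ↦ (w i).edges.toFinset
  have hS : S ⊆ G.edgeFinset := by
    refine biUnion_subset.2 fun i _ e he ↦ ?_
    simpa using (w i).edges_subset_edgeSet (List.mem_toFinset.1 he)
  have hcardS : #S = ∑ i, (w i).length := by
    rw [card_biUnion fun i _ j _ hij ↦ Finset.disjoint_left.2 fun e hi hj ↦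
      hij (hdisj i j e (List.mem_toFinset.1 hi) (List.mem_toFinset.1 hj))]
    simp [List.toFinset_card_of_nodup (htrail _).edges_nodup]
  have hcover : S = G.edgeFinset := eq_of_subset_of_card_le hS (hcardS ▸ hcard)
  intro e he
  obtain ⟨i, -, hi⟩ := mem_biUnion.1 (hcover ▸ mem_edgeFinset.2 he)
  exact ⟨i, List.mem_toFinset.1 hi, fun j hj ↦ hdisj j i e hj (List.mem_toFinset.1 hi)⟩

end SimpleGraph

namespace Walecki

open SimpleGraph

def zigzag (j : ℕ) : ℤ := if Even j then -(j / 2 : ℕ) else (j / 2 + 1 : ℕ)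

@[simp]
lemma zigzag_two_mul (k : ℕ) : zigzag (2 * k) = -k := by
  simp [zigzag]

@[simp]
lemma zigzag_two_mul_add_one (k : ℕ) : zigzag (2 * k + 1) = k + 1 := by
  rw [zigzag, if_neg (by simp), show (2 * k + 1) / 2 = k by omega]
  push_cast
  ring

lemma zigzag_add_zigzag_succ (j : ℕ) :
    zigzag j + zigzag (j + 1) = if Even j then 1 else 0 := by
  obtain ⟨k, rfl | rfl⟩ := Nat.even_or_odd' j
  · simp
  · simp [show 2 * k + 1 + 1 = 2 * (k + 1) by ring]

lemma zigzag_injective : Function.Injective zigzag := by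
  intro j j' h
  obtain ⟨k, rfl | rfl⟩ := Nat.even_or_odd' j <;> obtain ⟨k', rfl | rfl⟩ := Nat.even_or_odd' j' <;>
    simp only [zigzag_two_mul, zigzag_two_mul_add_one] at h <;> omega

lemma zigzag_mem_Ioc {m j : ℕ} (hj : j < 2 * m) : zigzag j ∈ Set.Ioc (-(m : ℤ)) m := by
  obtain ⟨k, rfl | rfl⟩ := Nat.even_or_odd' j <;>
    simp only [zigzag_two_mul, zigzag_two_mul_add_one, Set.mem_Ioc] <;> omega

variable {n m : ℕ}

def vertex (n i j : ℕ) : ZMod n := i + zigzag j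

lemma vertex_injOn (hn : n = 2 * m) (i : ℕ) : Set.InjOn (vertex n i) (Set.Iio n) := by
  intro j hj j' hj' h
  rw [vertex, vertex, add_right_inj, ZMod.intCast_eq_intCast_iff_dvd_sub] at h
  have := zigzag_mem_Ioc (hn ▸ hj : j < 2 * m)
  have := zigzag_mem_Ioc (hn ▸ hj' : j' < 2 * m)
  refine zigzag_injective (sub_eq_zero.1 (Int.eq_zero_of_abs_lt_dvd h ?_)).symm
  rw [abs_lt]
  simp only [Set.mem_Ioc] at *
  omega

lemma vertex_add_vertex_succ (i j : ℕ) :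
    vertex n i j + vertex n i (j + 1) = ((2 * i + if Even j then 1 else 0 : ℕ) : ZMod n) := by
  have := congrArg (fun z : ℤ ↦ (z : ZMod n)) (zigzag_add_zigzag_succ j)
  simp only [vertex] at this ⊢
  split_ifs at this ⊢ <;> push_cast at this ⊢ <;> linear_combination this

def path (hn : n = 2 * m) (i : ℕ) :
    (⊤ : SimpleGraph (ZMod n)).Walk (vertex n i 0) (vertex n i (n - 1)) :=
  walkOfFn _ (n - 1) fun j hj ↦ (top_adj _ _).2 fun h ↦ by
    have := vertex_injOn hn i (Set.mem_Iio.2 (by omega)) (Set.mem_Iio.2 (by omega)) h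
    omega

lemma isHamiltonian_path [NeZero n] (hn : n = 2 * m) (i : ℕ) : (path hn i).IsHamiltonian :=
  have hn1 : n - 1 + 1 = n := Nat.sub_add_cancel NeZero.one_le
  isHamiltonian_walkOfFn (by simp [hn1]) (hn1 ▸ vertex_injOn hn i)

lemma eq_of_mem_edges_path (hn : n = 2 * m) {i i' : ℕ} (hi : i < m) (hi' : i' < m)
    {e : Sym2 (ZMod n)} (he : e ∈ (path hn i).edges) (he' : e ∈ (path hn i').edges) :
    i = i' := by
  obtain ⟨j, -, rfl⟩ := exists_eq_of_mem_edges_walkOfFn he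
  obtain ⟨j', -, hjj'⟩ := exists_eq_of_mem_edges_walkOfFn he'
  have hsum := congrArg (Sym2.lift ⟨(· + ·), add_comm⟩) hjj'
  simp only [Sym2.lift_mk, vertex_add_vertex_succ, ZMod.natCast_eq_natCast_iff'] at hsum
  have hlt (i j : ℕ) (hi : i < m) : 2 * i + (if Even j then 1 else 0) < n := by
    split_ifs <;> omega
  rw [Nat.mod_eq_of_lt (hlt i j hi), Nat.mod_eq_of_lt (hlt i' j' hi')] at hsum
  split_ifs at hsum <;> omega

end Walecki

theorem SimpleGraph.hasHamiltonianPathDecomposition_top_zmod {n m : ℕ} [NeZero n]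
    (hn : n = 2 * m) : (⊤ : SimpleGraph (ZMod n)).HasHamiltonianPathDecomposition (Fin m) := by
  refine ⟨_, _, fun i ↦ Walecki.path hn i, fun i ↦ Walecki.isHamiltonian_path hn i,
    existsUnique_mem_edges_of_card_le_sum_length
      (fun i ↦ (Walecki.isHamiltonian_path hn i).isPath.isTrail)
      (fun i i' e he he' ↦ Fin.ext (Walecki.eq_of_mem_edges_path hn i.2 i'.2 he he')) ?_⟩
  rw [card_edgeFinset_top_eq_card_choose_two, ZMod.card, Nat.choose_two_right]
  simp [Walecki.path, hn, mul_assoc]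

/-- for even `n ≥ 2`, the edges of the complete graph `K_n` can be
partitioned into `n/2` edge-disjoint Hamiltonian paths. -/
theorem complete_graph_hamiltonian_path_decomposition (n : ℕ) (hn : 2 ≤ n) (heven : Even n) :
    ∃ (a b : Fin (n / 2) → Fin n)
      (w : ∀ i : Fin (n / 2), (⊤ : SimpleGraph (Fin n)).Walk (a i) (b i)),
      (∀ i, (w i).IsHamiltonian) ∧
      ∀ e ∈ (⊤ : SimpleGraph (Fin n)).edgeSet, ∃! i : Fin (n / 2), e ∈ (w i).edges := by
  obtain ⟨k, rfl⟩ : ∃ k, n = k + 1 := ⟨n - 1, by omega⟩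
  -- `ZMod (k + 1)` is by definition `Fin (k + 1)`.
  exact SimpleGraph.hasHamiltonianPathDecomposition_top_zmod (Nat.two_mul_div_two_of_even heven).symm
end

section
/- For all natural numbers t ≥ 1 and d ≥ 1, there exists a family Σ of at most ⌈t^d/2⌉ linear orders on the set (Fin t)^d of cells of the t × ⋯ × t grid of a d-dimensional cube such that for any two distinct cells c₁, c₂ ∈ (Fin t)^d there exists an order σ ∈ Σ in which c₁ and c₂ are adjacent, i.e., no cell c satisfies c₁ ≺_σ c ≺_σ c₂ or c₂ ≺_σ c ≺_σ c₁. -/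
/-!
Embed the cells into `ZMod (2 * n)` with `n = ⌈t^d/2⌉`. The zigzag path `0, 1, -1, 2, -2, …, n`
visits every residue, and its edges are exactly the pairs `{x, y}` with `x + y ∈ {0, 1}`.
Translating it by `k` turns this condition into `x + y ∈ {2k, 2k + 1}`, so the `n` translates
`k = 0, …, n - 1` together use every pair of residues as an edge (Walecki's decomposition
of `K_{2n}` into Hamiltonian paths). Reading each translate as a ranking of the cells gives the
orders.
-/

open Function

namespace ZMod

variable {n : ℕ}

/-- Position of `x` on the zigzag path `0, 1, -1, 2, -2, …, n` through `ZMod (2 * n)`. -/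
def zigzagIndex (n : ℕ) (x : ZMod (2 * n)) : ℕ :=
  if x.val = 0 then 0 else if x.val ≤ n then 2 * x.val - 1 else 2 * (2 * n - x.val)

variable [NeZero n]

theorem zigzagIndex_injective : Injective (zigzagIndex n) := by
  intro x y h
  have hx := x.val_lt
  have hy := y.val_lt
  apply val_injective
  unfold zigzagIndex at h
  split_ifs at h <;> omega

theorem zigzagIndex_consecutive_of_add_eq (x y : ZMod (2 * n)) (hxy : x ≠ y)
    (hsum : x + y = 0 ∨ x + y = 1) :
    zigzagIndex n x + 1 = zigzagIndex n y ∨ zigzagIndex n y + 1 = zigzagIndex n x := by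
  have hval : x.val ≠ y.val := fun h => hxy (val_injective _ h)
  have hx := x.val_lt
  have hy := y.val_lt
  have hn : 0 < n := Nat.pos_of_neZero n
  have hsum_val : (x + y).val = 0 ∨ (x + y).val = 1 := by
    rcases hsum with h | h <;> rw [h]
    · exact .inl val_zero
    · exact .inr (val_one'' (by omega))
  have hwrap : x.val + y.val = (x + y).val ∨ x.val + y.val = (x + y).val + 2 * n := by
    rcases Nat.lt_or_ge (x.val + y.val) (2 * n) with h | h
    · exact .inl (val_add_of_lt h).symm
    · exact .inr (val_add_val_of_le h)
  unfold zigzagIndex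
  split_ifs <;> omega

theorem exists_sub_two_mul_eq_zero_or_one (s : ZMod (2 * n)) :
    ∃ k < n, s - 2 * (k : ℕ) = 0 ∨ s - 2 * (k : ℕ) = 1 := by
  refine ⟨s.val / 2, by have := s.val_lt; omega, ?_⟩
  have hs : ((2 * (s.val / 2) + s.val % 2 : ℕ) : ZMod (2 * n)) = s := by
    rw [Nat.div_add_mod, natCast_zmod_val]
  have hr : s.val % 2 < 2 := Nat.mod_lt _ two_pos
  generalize s.val / 2 = q at hs ⊢
  generalize s.val % 2 = r at hs hr
  subst hs
  interval_cases r <;> simp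

theorem exists_zigzagIndex_sub_consecutive (a b : ZMod (2 * n)) (hab : a ≠ b) :
    ∃ k < n, zigzagIndex n (a - (k : ℕ)) + 1 = zigzagIndex n (b - (k : ℕ)) ∨
      zigzagIndex n (b - (k : ℕ)) + 1 = zigzagIndex n (a - (k : ℕ)) := by
  obtain ⟨k, hk, hsum⟩ := exists_sub_two_mul_eq_zero_or_one (a + b)
  refine ⟨k, hk, zigzagIndex_consecutive_of_add_eq _ _ (by simpa using hab) ?_⟩
  convert hsum using 2 <;> ring

end ZMod

theorem exists_injective_ranks_every_pair_consecutive (X : Type*) [Fintype X] (n : ℕ)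
    (hX : Fintype.card X ≤ 2 * n) :
    ∃ r : Fin n → X → ℕ, (∀ k, Injective (r k)) ∧
      ∀ x y, x ≠ y → ∃ k, r k x + 1 = r k y ∨ r k y + 1 = r k x := by
  rcases Nat.eq_zero_or_pos n with rfl | hn
  · refine ⟨fun k => k.elim0, fun k => k.elim0, fun x => ?_⟩
    have := Fintype.card_pos_iff.mpr ⟨x⟩
    omega
  have : NeZero n := ⟨hn.ne'⟩
  obtain ⟨e⟩ : Nonempty (X ↪ ZMod (2 * n)) :=
    Function.Embedding.nonempty_of_card_le (by rwa [ZMod.card])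
  refine ⟨fun k x => ZMod.zigzagIndex n (e x - (k : ℕ)), fun k => ?_, fun x y hxy => ?_⟩
  · exact ZMod.zigzagIndex_injective.comp <| sub_left_injective.comp e.injective
  · obtain ⟨k, hk, h⟩ :=
      ZMod.exists_zigzagIndex_sub_consecutive (e x) (e y) (e.injective.ne hxy)
    exact ⟨⟨k, hk⟩, h⟩

theorem exists_grid_orderings_every_pair_adjacent_general (t d : ℕ) :
    ∃ (m : ℕ) (σ : Fin m → ((Fin d → Fin t) → (Fin d → Fin t) → Prop)),
      m ≤ (t ^ d + 1) / 2 ∧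
      (∀ k, IsStrictTotalOrder (Fin d → Fin t) (σ k)) ∧
      ∀ c₁ c₂ : Fin d → Fin t, c₁ ≠ c₂ →
        ∃ k, ∀ c : Fin d → Fin t,
          ¬(σ k c₁ c ∧ σ k c c₂) ∧ ¬(σ k c₂ c ∧ σ k c c₁) := by
  obtain ⟨r, hr_inj, hr_consec⟩ :=
    exists_injective_ranks_every_pair_consecutive (Fin d → Fin t) ((t ^ d + 1) / 2)
      (by simp only [Fintype.card_fun, Fintype.card_fin]; omega)
  refine ⟨_, fun k x y => r k x < r k y, le_rfl,
    fun k => (hr_inj k).isStrictTotalOrder_onFun (· < ·), fun c₁ c₂ hne => ?_⟩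
  obtain ⟨k, hk⟩ := hr_consec c₁ c₂ hne
  exact ⟨k, fun c => by omega⟩

/-- there are at most `⌈t^d/2⌉` linear orders on the cells `(Fin t)^d` of the
`t × ⋯ × t` grid of a `d`-dimensional cube such that every pair of distinct cells is
adjacent in one of them. -/
theorem exists_grid_orderings_every_pair_adjacent (t d : ℕ) (ht : 1 ≤ t) (hd : 1 ≤ d) :
    ∃ (m : ℕ) (σ : Fin m → ((Fin d → Fin t) → (Fin d → Fin t) → Prop)),
      m ≤ (t ^ d + 1) / 2 ∧
      (∀ k, IsStrictTotalOrder (Fin d → Fin t) (σ k)) ∧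
      ∀ c₁ c₂ : Fin d → Fin t, c₁ ≠ c₂ →
        ∃ k, ∀ c : Fin d → Fin t,
          ¬(σ k c₁ c ∧ σ k c c₂) ∧ ¬(σ k c₂ c ∧ σ k c c₁) :=
  exists_grid_orderings_every_pair_adjacent_general t d
end

section
/- Let d ≥ 1 and let p, q ∈ [0,1)^d be two distinct points. Set D = 2⌈d/2⌉ and, for i = 0, …, D, let v_i = (i/(D+1), …, i/(D+1)) ∈ ℝ^d. Then there exist an index i ∈ {0, …, D}, an integer ℓ ≥ 0, and integers k₁, …, k_d with 0 ≤ k_j < 2^ℓ, such that both p + v_i and q + v_i lie in the dyadic cell ∏_{j=1}^d [k_j · 2^{1−ℓ}, (k_j + 1) · 2^{1−ℓ}) ⊆ [0,2)^d, and this cell has side length 2^{1−ℓ} ≤ 2(D+1) · ‖p − q‖, where ‖·‖ is the Euclidean norm. -/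
def unitCube (d : ℕ) : Set (EuclideanSpace ℝ (Fin d)) :=
  {x | ∀ i, x i ∈ Set.Ico (0 : ℝ) 1}

/-!
Let `N > d` be odd and `ε = N ‖p - q‖`. If `ε > 1` the root cell `[0,2)^d` works. Otherwise
pick `e` with `2^e ≤ ε⁻¹ < 2^(e+1)` and use the grid `2^(-e) ℤ`, whose cells have side
`2^(-e) < 2ε`. In a coordinate `j`, call the shift `i / N` bad if a grid point separates
`p j + i / N` from `q j + i / N`. Two bad shifts `i₁, i₂` yield integers `m₁, m₂` with
`|(i₁ - i₂) 2^e - (m₁ - m₂) N| < N |p j - q j| 2^e ≤ 1`, so `N ∣ (i₁ - i₂) 2^e`; as `N` is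
odd, `i₁ = i₂`. Hence each of the `d < N` coordinates rules out at most one of the `N` shifts,
and any remaining shift puts both points into one dyadic cell of level `e + 1`.
-/

open Finset

lemma eq_of_abs_sub_mul_sub_mul_lt_one {N M i₁ i₂ : ℕ} (hNM : N.Coprime M)
    (h₁ : i₁ < N) (h₂ : i₂ < N) {b : ℤ} (h : |((i₁ : ℝ) - i₂) * M - b * N| < 1) :
    i₁ = i₂ := by
  have hint : ((i₂ : ℤ) - i₁) * M = -b * N := by
    have : |((i₁ : ℤ) - i₂) * M - b * N| < 1 := by exact_mod_cast h
    linear_combination -Int.abs_lt_one_iff.mp this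
  have hdvd : (N : ℤ) ∣ ((i₂ : ℤ) - i₁) * M := ⟨-b, by rw [hint]; ring⟩
  have hN : (N : ℤ) ∣ (i₂ : ℤ) - i₁ :=
    (Nat.isCoprime_iff_coprime.mpr hNM).dvd_of_dvd_mul_right hdvd
  exact Nat.ModEq.eq_of_lt_of_lt (Nat.modEq_iff_dvd.mpr hN) h₁ h₂

lemma eq_of_floor_shift_ne {N M : ℕ} (hNM : N.Coprime M) {x y : ℝ}
    (hxy : |x - y| * N * M ≤ 1) {i₁ i₂ : ℕ} (h₁ : i₁ < N) (h₂ : i₂ < N)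
    (hb₁ : ⌊(x + i₁ / N) * M⌋ ≠ ⌊(y + i₁ / N) * M⌋)
    (hb₂ : ⌊(x + i₂ / N) * M⌋ ≠ ⌊(y + i₂ / N) * M⌋) :
    i₁ = i₂ := by
  wlog hle : x ≤ y generalizing x y
  · exact this (by rwa [abs_sub_comm]) hb₁.symm hb₂.symm (le_of_not_ge hle)
  rw [abs_sub_comm, abs_of_nonneg (sub_nonneg.mpr hle)] at hxy
  have hN : (0 : ℝ) < N := by exact_mod_cast Nat.zero_lt_of_lt h₁
  have grid : ∀ i : ℕ, ⌊(x + i / N) * M⌋ ≠ ⌊(y + i / N) * M⌋ →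
      ∃ m : ℤ, (x + i / N) * M < m ∧ (m : ℝ) ≤ (y + i / N) * M :=
    fun i hi => ⟨_, Int.floor_lt.mp ((Int.floor_mono (by gcongr)).lt_of_ne hi), Int.floor_le _⟩
  obtain ⟨m₁, hl₁, hu₁⟩ := grid i₁ hb₁
  obtain ⟨m₂, hl₂, hu₂⟩ := grid i₂ hb₂
  refine eq_of_abs_sub_mul_sub_mul_lt_one hNM h₁ h₂ (b := m₁ - m₂) ?_
  have hexpand : ((i₁ : ℝ) - i₂) * M - ((m₁ - m₂ : ℤ) : ℝ) * N
      = N * ((m₂ - (x + i₂ / N) * M) - (m₁ - (x + i₁ / N) * M)) := by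
    push_cast; field_simp; ring
  rw [hexpand, abs_mul, abs_of_pos hN]
  calc (N : ℝ) * |(m₂ - (x + i₂ / N) * M) - (m₁ - (x + i₁ / N) * M)|
      < N * ((y - x) * M) := mul_lt_mul_of_pos_left (abs_lt.mpr ⟨by linarith, by linarith⟩) hN
    _ ≤ 1 := by linarith

lemma exists_shift_floor_eq {ι : Type*} [Fintype ι] {N M : ℕ} (hNM : N.Coprime M)
    (hιN : Fintype.card ι < N) {x y : ι → ℝ} (hxy : ∀ j, |x j - y j| * N * M ≤ 1) :
    ∃ i < N, ∀ j, ⌊(x j + i / N) * M⌋ = ⌊(y j + i / N) * M⌋ := by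
  classical
  let bad j := (range N).filter fun i : ℕ => ⌊(x j + i / N) * M⌋ ≠ ⌊(y j + i / N) * M⌋
  have hbad : ∀ j ∈ univ, #(bad j) ≤ 1 := fun j _ => by
    refine card_le_one.mpr fun i₁ hi₁ i₂ hi₂ => ?_
    simp only [bad, mem_filter, mem_range] at hi₁ hi₂
    exact eq_of_floor_shift_ne hNM (hxy j) hi₁.1 hi₂.1 hi₁.2 hi₂.2
  have hcard : #(univ.biUnion bad) < #(range N) := by
    simpa using (card_biUnion_le_card_mul univ bad 1 hbad).trans_lt (by simpa using hιN)
  obtain ⟨i, hi, hgood⟩ := exists_mem_notMem_of_card_lt_card hcard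
  refine ⟨i, mem_range.mp hi, fun j => ?_⟩
  by_contra hne
  exact hgood (mem_biUnion.mpr ⟨j, mem_univ _, mem_filter.mpr ⟨hi, hne⟩⟩)

lemma add_div_mem_Ico_zero_two {t : ℝ} (ht : t ∈ Set.Ico 0 1) {i N : ℕ} (hi : i < N) :
    t + i / N ∈ Set.Ico 0 2 := by
  have hN : (0 : ℝ) < N := by exact_mod_cast Nat.zero_lt_of_lt hi
  have hiN : (i : ℝ) / N < 1 := (div_lt_one hN).mpr (by exact_mod_cast hi)
  exact ⟨add_nonneg ht.1 (by positivity), by linarith [ht.2]⟩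

lemma mem_Ico_natFloor_div_mul {x c : ℝ} (hx : 0 ≤ x) (hc : 0 < c) :
    x ∈ Set.Ico (⌊x / c⌋₊ * c) ((⌊x / c⌋₊ + 1) * c) :=
  ⟨(le_div_iff₀ hc).mp (Nat.floor_le (div_nonneg hx hc.le)),
    (div_lt_iff₀ hc).mp (Nat.lt_floor_add_one _)⟩

lemma natFloor_div_two_zpow_lt {x : ℝ} (hx₀ : 0 ≤ x) (hx₂ : x < 2) (ℓ : ℕ) :
    ⌊x / 2 ^ (1 - (ℓ : ℤ))⌋₊ < 2 ^ ℓ := by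
  rw [Nat.floor_lt (by positivity), div_lt_iff₀ (by positivity), Nat.cast_pow, Nat.cast_ofNat,
    ← zpow_natCast, ← zpow_add₀ two_ne_zero, add_sub_cancel, zpow_one]
  exact hx₂

lemma exists_dyadic_cell_of_natFloor_eq {ι : Type*} (ℓ : ℕ) {x y : ι → ℝ}
    (hx : ∀ j, x j ∈ Set.Ico 0 2) (hy : ∀ j, 0 ≤ y j)
    (h : ∀ j, ⌊x j / 2 ^ (1 - (ℓ : ℤ))⌋₊ = ⌊y j / 2 ^ (1 - (ℓ : ℤ))⌋₊) :
    ∃ k : ι → ℕ, (∀ j, k j < 2 ^ ℓ) ∧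
      (∀ j, x j ∈ Set.Ico ((k j : ℝ) * 2 ^ (1 - (ℓ : ℤ)))
        ((k j + 1) * 2 ^ (1 - (ℓ : ℤ)))) ∧
      (∀ j, y j ∈ Set.Ico ((k j : ℝ) * 2 ^ (1 - (ℓ : ℤ)))
        ((k j + 1) * 2 ^ (1 - (ℓ : ℤ)))) :=
  ⟨fun j => ⌊x j / 2 ^ (1 - (ℓ : ℤ))⌋₊,
    fun j => natFloor_div_two_zpow_lt (hx j).1 (hx j).2 ℓ,
    fun j => mem_Ico_natFloor_div_mul (hx j).1 (by positivity),
    fun j => by simpa only [h j] using mem_Ico_natFloor_div_mul (hy j) (by positivity)⟩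

lemma two_zpow_one_sub_succ (e : ℕ) :
    (2 : ℝ) ^ (1 - ((e + 1 : ℕ) : ℤ)) = ((2 ^ e : ℕ) : ℝ)⁻¹ := by
  rw [show 1 - ((e + 1 : ℕ) : ℤ) = -(e : ℤ) by push_cast; ring, zpow_neg, zpow_natCast]
  push_cast; rfl

theorem exists_shift_natFloor_eq {d N : ℕ} (hN : Odd N) (hdN : d < N)
    {p q : EuclideanSpace ℝ (Fin d)} (hp : p ∈ unitCube d) (hq : q ∈ unitCube d)
    (hpq : p ≠ q) :
    ∃ i < N, ∃ ℓ : ℕ,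
      (∀ j, ⌊(p j + i / N) / 2 ^ (1 - (ℓ : ℤ))⌋₊ =
        ⌊(q j + i / N) / 2 ^ (1 - (ℓ : ℤ))⌋₊) ∧
      (2 : ℝ) ^ (1 - (ℓ : ℤ)) ≤ 2 * N * ‖p - q‖ := by
  have hNpos : (0 : ℝ) < N := by exact_mod_cast hN.pos
  have hε : 0 < N * ‖p - q‖ := mul_pos hNpos (norm_pos_iff.mpr (sub_ne_zero.mpr hpq))
  rcases lt_or_ge 1 (N * ‖p - q‖) with hfar | hnear
  · refine ⟨0, hN.pos, 0, fun j => ?_, by norm_num; linarith⟩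
    rw [Nat.floor_eq_zero.mpr, Nat.floor_eq_zero.mpr] <;> norm_num <;> linarith [(hp j).2, (hq j).2]
  obtain ⟨e, hle, hlt⟩ := exists_nat_pow_near (one_le_inv₀ hε |>.mpr hnear) one_lt_two
  have hxy : ∀ j, |p j - q j| * N * (2 ^ e : ℕ) ≤ 1 := fun j => by
    have hj : |p j - q j| ≤ ‖p - q‖ := by simpa using PiLp.norm_apply_le (p - q) j
    calc |p j - q j| * N * (2 ^ e : ℕ) ≤ N * ‖p - q‖ * 2 ^ e := by
          push_cast; rw [mul_comm (N : ℝ)]; gcongr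
      _ ≤ N * ‖p - q‖ * (N * ‖p - q‖)⁻¹ := by gcongr
      _ = 1 := mul_inv_cancel₀ hε.ne'
  obtain ⟨i, hi, hfloor⟩ := exists_shift_floor_eq
    (Nat.Coprime.pow_right _ (Nat.coprime_two_right.mpr hN)) (by simpa using hdN) hxy
  refine ⟨i, hi, e + 1, fun j => ?_, ?_⟩
  · rw [two_zpow_one_sub_succ, div_inv_eq_mul, div_inv_eq_mul, ← Int.floor_toNat,
      ← Int.floor_toNat, hfloor j]
  · have hscale := inv_lt_of_inv_lt₀ hε hlt
    rw [pow_succ, mul_inv] at hscale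
    rw [two_zpow_one_sub_succ, Nat.cast_pow, Nat.cast_ofNat]
    linarith

theorem shifting_lemma_general (d : ℕ)
    (p q : EuclideanSpace ℝ (Fin d)) (hp : p ∈ unitCube d) (hq : q ∈ unitCube d)
    (hpq : p ≠ q) :
    ∃ (i : ℕ), i ≤ 2 * ((d + 1) / 2) ∧
      ∃ (ℓ : ℕ) (k : Fin d → ℕ),
        (∀ j, k j < 2 ^ ℓ) ∧
        (∀ j, p j + (i : ℝ) / (2 * ((d + 1) / 2 : ℕ) + 1) ∈
            Set.Ico ((k j : ℝ) * 2 ^ (1 - (ℓ : ℤ))) (((k j : ℝ) + 1) * 2 ^ (1 - (ℓ : ℤ)))) ∧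
        (∀ j, q j + (i : ℝ) / (2 * ((d + 1) / 2 : ℕ) + 1) ∈
            Set.Ico ((k j : ℝ) * 2 ^ (1 - (ℓ : ℤ))) (((k j : ℝ) + 1) * 2 ^ (1 - (ℓ : ℤ)))) ∧
        (2 : ℝ) ^ (1 - (ℓ : ℤ)) ≤ 2 * (2 * ((d + 1) / 2 : ℕ) + 1) * ‖p - q‖ := by
  obtain ⟨i, hi, ℓ, hfloor, hside⟩ := exists_shift_natFloor_eq
    (N := 2 * ((d + 1) / 2) + 1) (odd_two_mul_add_one _) (by omega) hp hq hpq
  obtain ⟨k, hk, hpk, hqk⟩ := exists_dyadic_cell_of_natFloor_eq ℓ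
    (fun j => add_div_mem_Ico_zero_two (hp j) hi)
    (fun j => (add_div_mem_Ico_zero_two (hq j) hi).1) hfloor
  push_cast at hpk hqk hside
  exact ⟨i, by omega, ℓ, k, hk, hpk, hqk, hside⟩

/-- shifting lemma. For any two distinct points `p, q ∈ [0,1)^d`, one of the
`D+1` diagonal shifts `v_i = (i/(D+1), …, i/(D+1))`, `D = 2⌈d/2⌉`, places both points in a
common dyadic cell of `[0,2)^d` of side length at most `2(D+1)‖p − q‖`. -/
theorem shifting_lemma (d : ℕ) (hd : 1 ≤ d)
    (p q : EuclideanSpace ℝ (Fin d)) (hp : p ∈ unitCube d) (hq : q ∈ unitCube d)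
    (hpq : p ≠ q) :
    ∃ (i : ℕ), i ≤ 2 * ((d + 1) / 2) ∧
      ∃ (ℓ : ℕ) (k : Fin d → ℕ),
        (∀ j, k j < 2 ^ ℓ) ∧
        (∀ j, p j + (i : ℝ) / (2 * ((d + 1) / 2 : ℕ) + 1) ∈
            Set.Ico ((k j : ℝ) * 2 ^ (1 - (ℓ : ℤ))) (((k j : ℝ) + 1) * 2 ^ (1 - (ℓ : ℤ)))) ∧
        (∀ j, q j + (i : ℝ) / (2 * ((d + 1) / 2 : ℕ) + 1) ∈
            Set.Ico ((k j : ℝ) * 2 ^ (1 - (ℓ : ℤ))) (((k j : ℝ) + 1) * 2 ^ (1 - (ℓ : ℤ)))) ∧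
        (2 : ℝ) ^ (1 - (ℓ : ℤ)) ≤ 2 * (2 * ((d + 1) / 2 : ℕ) + 1) * ‖p - q‖ :=
  shifting_lemma_general d p q hp hq hpq
end

section
/- Let n > 1 be an odd integer, let ℓ ≥ 0 be an integer, and set α = 2^{−ℓ}. Then the set { (i/n) mod α : i = 0, 1, …, n−1 } equals the set { α·i/n : i = 0, 1, …, n−1 }, where for real numbers x ≥ 0 and y > 0, x mod y denotes x − y·⌊x/y⌋. -/
/-
Write α = 2^{-ℓ} = 1/m with m = 2^ℓ. Then (i/n) mod α = α · fract(m i / n) = α · ((m i) mod n) / n,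
so the first set is the image of i ↦ (m i) mod n under k ↦ α k / n. Since n is odd, m is a unit
modulo n, so i ↦ (m i) mod n permutes {0, …, n−1}.
-/

/-- `x mod y = x − y·⌊x/y⌋` for real numbers. -/
noncomputable def rmod (x y : ℝ) : ℝ := x - y * ⌊x / y⌋

lemma rmod_eq_mul_fract {y : ℝ} (hy : y ≠ 0) (x : ℝ) : rmod x y = y * Int.fract (x / y) := by
  rw [rmod, Int.fract, mul_sub, mul_div_cancel₀ x hy]

lemma rmod_natCast_div_inv_natCast {m : ℕ} (hm : m ≠ 0) (i n : ℕ) :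
    rmod ((i : ℝ) / n) (m : ℝ)⁻¹ = (m : ℝ)⁻¹ * ((m * i % n : ℕ) : ℝ) / n := by
  have hdiv : (i : ℝ) / n / (m : ℝ)⁻¹ = ((m * i : ℕ) : ℝ) / n := by
    rw [div_inv_eq_mul, Nat.cast_mul]; ring
  rw [rmod_eq_mul_fract (inv_ne_zero (Nat.cast_ne_zero.mpr hm)), hdiv,
    Int.fract_div_natCast_eq_div_natCast_mod, mul_div_assoc]

lemma Nat.Coprime.exists_lt_mul_mod_eq {a n j : ℕ} (h : a.Coprime n) (hj : j < n) :
    ∃ i < n, a * i % n = j := by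
  have : NeZero n := ⟨by omega⟩
  obtain ⟨y, hy : a • y = (j : ZMod n)⟩ := (Nat.Coprime.nsmul_right_bijective (G := ZMod n)
    (by rwa [Nat.card_zmod, Nat.coprime_comm])).2 (j : ZMod n)
  refine ⟨y.val, y.val_lt, ?_⟩
  rw [← ZMod.val_natCast, Nat.cast_mul, ZMod.natCast_zmod_val, ← nsmul_eq_mul, hy,
    ZMod.val_natCast, Nat.mod_eq_of_lt hj]

theorem shift_set_mod_pow_two_general (n : ℕ) (hodd : Odd n) (ℓ : ℕ) :
    {x : ℝ | ∃ i : ℕ, i < n ∧ x = rmod ((i : ℝ) / n) ((2 : ℝ) ^ (-(ℓ : ℤ)))} =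
      {x : ℝ | ∃ i : ℕ, i < n ∧ x = (2 : ℝ) ^ (-(ℓ : ℤ)) * i / n} := by
  have hα : (2 : ℝ) ^ (-(ℓ : ℤ)) = ((2 ^ ℓ : ℕ) : ℝ)⁻¹ := by
    rw [zpow_neg, zpow_natCast, Nat.cast_pow, Nat.cast_ofNat]
  have hcop : (2 ^ ℓ).Coprime n := (Nat.coprime_two_left.mpr hodd).pow_left ℓ
  simp only [hα, rmod_natCast_div_inv_natCast (pow_ne_zero ℓ two_ne_zero) _ n]
  ext x
  constructor
  · rintro ⟨i, -, rfl⟩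
    exact ⟨_, Nat.mod_lt _ hodd.pos, rfl⟩
  · rintro ⟨j, hj, rfl⟩
    obtain ⟨i, hi, hij⟩ := hcop.exists_lt_mul_mod_eq hj
    exact ⟨i, hi, by rw [hij]⟩

/-- for odd `n > 1` and `α = 2^{-ℓ}`, the set `{(i/n) mod α : 0 ≤ i < n}`
equals the set `{α·i/n : 0 ≤ i < n}`. -/
theorem shift_set_mod_pow_two (n : ℕ) (hn : 1 < n) (hodd : Odd n) (ℓ : ℕ) :
    {x : ℝ | ∃ i : ℕ, i < n ∧ x = rmod ((i : ℝ) / n) ((2 : ℝ) ^ (-(ℓ : ℤ)))} =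
      {x : ℝ | ∃ i : ℕ, i < n ∧ x = (2 : ℝ) ^ (-(ℓ : ℤ)) * i / n} :=
  shift_set_mod_pow_two_general n hodd ℓ
end

section
/- For all natural numbers a, b ≥ 1: Nat.log2 a < Nat.log2 b if and only if a < b and a < a XOR b, where XOR denotes the bitwise exclusive-or of natural numbers and Nat.log2 x = ⌊log₂ x⌋ is the position of the most significant bit of x. -/
lemma testBit_of_mem (x k : ℕ) (h1 : 2 ^ k ≤ x) (h2 : x < 2 ^ (k+1)) :
    x.testBit k = true := by
  rw [Nat.testBit_eq_decide_div_mod_eq]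
  have : x / 2 ^ k = 1 := Nat.div_eq_of_lt_le (by simpa using h1) (by
    rw [Nat.succ_mul, Nat.one_mul]
    calc x < 2 ^ (k+1) := h2
    _ = 2^k + 2^k := by ring)
  simp [this]

lemma two_pow_le_of_testBit (x k : ℕ) (h : x.testBit k = true) : 2 ^ k ≤ x := by
  by_contra hlt
  rw [Nat.testBit_lt_two_pow (by omega)] at h
  exact Bool.false_ne_true h

/-- comparison of most significant bits via xor:
`msb(a) < msb(b)` iff `a < b` and `a < a XOR b`. -/
theorem log2_lt_iff_lt_and_lt_xor (a b : ℕ) (ha : 1 ≤ a) (hb : 1 ≤ b) :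
    Nat.log2 a < Nat.log2 b ↔ a < b ∧ a < a ^^^ b := by
  have ha' : a ≠ 0 := by omega
  have hb' : b ≠ 0 := by omega
  constructor
  · intro h
    have halt : a < 2 ^ Nat.log2 b := (Nat.log2_lt ha').1 h
    have hble : 2 ^ Nat.log2 b ≤ b := Nat.log2_self_le hb'
    refine ⟨lt_of_lt_of_le halt hble, ?_⟩
    have hta : a.testBit (Nat.log2 b) = false := Nat.testBit_lt_two_pow halt
    have htb : b.testBit (Nat.log2 b) = true :=
      testBit_of_mem b _ hble Nat.lt_log2_self
    have : (a ^^^ b).testBit (Nat.log2 b) = true := by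
      rw [Nat.testBit_xor, hta, htb]; rfl
    exact lt_of_lt_of_le halt (two_pow_le_of_testBit _ _ this)
  · rintro ⟨hab, hx⟩
    by_contra hle
    push_neg at hle
    rcases lt_or_eq_of_le hle with h | h
    · have : b < 2 ^ Nat.log2 a :=
        lt_of_lt_of_le Nat.lt_log2_self (Nat.pow_le_pow_right (by norm_num) h)
      exact absurd hab (not_lt.2 (le_trans this.le (Nat.log2_self_le ha')))
    · set k := Nat.log2 b with hk
      have hta : a.testBit k = true :=
        testBit_of_mem a _ (h ▸ Nat.log2_self_le ha') (h ▸ Nat.lt_log2_self)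
      have htb : b.testBit k = true := testBit_of_mem b _ (Nat.log2_self_le hb') Nat.lt_log2_self
      have hxlt : a ^^^ b < 2 ^ (k+1) :=
        Nat.xor_lt_two_pow (h ▸ Nat.lt_log2_self) Nat.lt_log2_self
      have hxbit : (a ^^^ b).testBit k = false := by
        rw [Nat.testBit_xor, hta, htb]; rfl
      have : a ^^^ b < 2 ^ k := by
        by_contra hge
        rw [testBit_of_mem _ _ (by omega) hxlt] at hxbit
        simp at hxbit
      have : a ^^^ b < a := lt_of_lt_of_le this (h ▸ Nat.log2_self_le ha')
      omega
end
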